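/- arXiv:2507.12861 — 4 statements merged into one kernel-verified Lean document; each statement's English description precedes it below -/
import Mathlib

section
/- Let θ ∈ (0, π/2) and define γ : (0, π) → ℝ³ by γ(s) = (sin θ·sin s·cos(cot θ·ln(tan(s/2))), sin θ·sin s·sin(cot θ·ln(tan(s/2))), −sin θ·cos s). Then the curvature and torsion of γ satisfy κ(s) = ‖γ''(s)‖ = √(1 − sin²θ·cos²s)/(sin θ·sin s) and τ(s) = det(γ'(s), γ''(s), γ'''(s))/‖γ''(s)‖² = cos θ/(1 − sin²θ·cos²s) for all s ∈ (0, π). In particular the ratio τ/κ is not constant, so γ does not satisfy the Lancret relation. -/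
/-!
Write `γ(s) = sin θ (sin s · e(φ) - cos s · e₃)`, where `e(φ) = (cos φ, sin φ, 0)` and
`φ(s) = cot θ · log (tan (s / 2))`, so that `φ' = cot θ / sin s`. In the frame
`(e(φ), e(φ + π/2), e₃)`, which rotates about `e₃`, differentiation only adds `φ'` times a
quarter turn of the horizontal part, and the norm and the determinant are the same as in the
standard frame. The three derivatives therefore have coordinates rational in `sin s`, `cos s`,
and curvature and torsion follow from `1 - sin² θ cos² s = sin² θ (sin² s + cot² θ)`.
The ratio `τ / κ = sin θ cos θ sin s / (1 - sin² θ cos² s) ^ (3/2)` equals `sin θ cos θ` at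
`s = π / 2` but tends to `0` as `s → 0`.
-/

open Real
open scoped RealInnerProductSpace

/-- A point/vector of Euclidean 3-space. -/
noncomputable def v3 (x y z : ℝ) : EuclideanSpace ℝ (Fin 3) := WithLp.toLp 2 ![x, y, z]

/-- Determinant of the 3×3 matrix with rows u, v, w. -/
noncomputable def det3 (u v w : EuclideanSpace ℝ (Fin 3)) : ℝ :=
  Matrix.det !![u 0, u 1, u 2; v 0, v 1, v 2; w 0, w 1, w 2]

open Set

lemma hasDerivAt_v3 {x y z : ℝ → ℝ} {x' y' z' s : ℝ}
    (hx : HasDerivAt x x' s) (hy : HasDerivAt y y' s) (hz : HasDerivAt z z' s) :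
    HasDerivAt (fun t => v3 (x t) (y t) (z t)) (v3 x' y' z') s := by
  have hp : HasDerivAt (fun t => ![x t, y t, z t]) ![x', y', z'] s :=
    hasDerivAt_pi.2 fun i => by fin_cases i <;> simpa
  exact (PiLp.continuousLinearEquiv 2 ℝ (fun _ : Fin 3 => ℝ)).symm.hasFDerivAt.comp_hasDerivAt s hp

lemma norm_v3 (x y z : ℝ) : ‖v3 x y z‖ = √(x ^ 2 + y ^ 2 + z ^ 2) := by
  simp [EuclideanSpace.norm_eq, v3, Fin.sum_univ_three]

lemma det3_v3 (a₁ b₁ c₁ a₂ b₂ c₂ a₃ b₃ c₃ : ℝ) :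
    det3 (v3 a₁ b₁ c₁) (v3 a₂ b₂ c₂) (v3 a₃ b₃ c₃) =
      a₁ * (b₂ * c₃ - c₂ * b₃) - b₁ * (a₂ * c₃ - c₂ * a₃) + c₁ * (a₂ * b₃ - b₂ * a₃) := by
  simp only [det3, v3, Fin.isValue, Matrix.cons_val_zero, Matrix.cons_val_one, Matrix.cons_val,
    Matrix.det_fin_three, Matrix.of_apply, Matrix.cons_val', Matrix.cons_val_fin_one]
  ring

/-- The vector with coordinates `(a, b, c)` in the orthonormal frame obtained from the standard
one by rotating it through the angle `φ` about the third axis. -/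
noncomputable def frameVec (φ a b c : ℝ) : EuclideanSpace ℝ (Fin 3) :=
  v3 (a * cos φ - b * sin φ) (a * sin φ + b * cos φ) c

lemma norm_frameVec (φ a b c : ℝ) : ‖frameVec φ a b c‖ = √(a ^ 2 + b ^ 2 + c ^ 2) := by
  rw [frameVec, norm_v3]
  congr 1
  linear_combination (a ^ 2 + b ^ 2) * sin_sq_add_cos_sq φ

lemma det3_frameVec (φ a₁ b₁ c₁ a₂ b₂ c₂ a₃ b₃ c₃ : ℝ) :
    det3 (frameVec φ a₁ b₁ c₁) (frameVec φ a₂ b₂ c₂) (frameVec φ a₃ b₃ c₃) =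
      det3 (v3 a₁ b₁ c₁) (v3 a₂ b₂ c₂) (v3 a₃ b₃ c₃) := by
  simp only [frameVec, det3_v3]
  linear_combination
    (a₁ * (b₂ * c₃ - c₂ * b₃) - b₁ * (a₂ * c₃ - c₂ * a₃) + c₁ * (a₂ * b₃ - b₂ * a₃)) *
      sin_sq_add_cos_sq φ

lemma HasDerivAt.frameVec {φ a b c : ℝ → ℝ} {φ' a' b' c' s : ℝ} (hφ : HasDerivAt φ φ' s)
    (ha : HasDerivAt a a' s) (hb : HasDerivAt b b' s) (hc : HasDerivAt c c' s) :
    HasDerivAt (fun t => frameVec (φ t) (a t) (b t) (c t))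
      (frameVec (φ s) (a' - b s * φ') (b' + a s * φ') c') s := by
  have hcos := hφ.cos
  have hsin := hφ.sin
  refine hasDerivAt_v3 (((ha.mul hcos).sub (hb.mul hsin)).congr_deriv ?_)
    (((ha.mul hsin).add (hb.mul hcos)).congr_deriv ?_) hc <;> ring

lemma hasDerivAt_log_tan_half {s : ℝ} (hs : sin s ≠ 0) :
    HasDerivAt (fun t => log (tan (t / 2))) (1 / sin s) s := by
  have hsin_double : sin s = 2 * sin (s / 2) * cos (s / 2) := by
    rw [← sin_two_mul]; ring_nf
  have hsin : sin (s / 2) ≠ 0 := fun h => hs (by rw [hsin_double, h]; ring)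
  have hcos : cos (s / 2) ≠ 0 := fun h => hs (by rw [hsin_double, h]; ring)
  have htan : tan (s / 2) ≠ 0 := by rw [tan_eq_sin_div_cos]; exact div_ne_zero hsin hcos
  have hhalf : HasDerivAt (fun t : ℝ => t / 2) (1 / 2) s := (hasDerivAt_id' s).div_const 2
  refine ((hasDerivAt_log htan).comp s ((Real.hasDerivAt_tan hcos).comp s hhalf)).congr_deriv ?_
  rw [tan_eq_sin_div_cos, hsin_double]
  field_simp

/-- For `r = sin θ`, `k = cot θ` this is the unit-speed loxodrome on the sphere of radius `sin θ`
that crosses the parallels at the constant angle `θ`, parametrised by its colatitude `s`. -/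
noncomputable def loxodrome (r k s : ℝ) : EuclideanSpace ℝ (Fin 3) :=
  frameVec (k * log (tan (s / 2))) (r * sin s) 0 (-(r * cos s))

section Loxodrome

variable (r k : ℝ) {s : ℝ}

lemma hasDerivAt_loxodrome (hs : sin s ≠ 0) :
    HasDerivAt (loxodrome r k)
      (frameVec (k * log (tan (s / 2))) (r * cos s) (r * k) (r * sin s)) s := by
  have h := ((hasDerivAt_log_tan_half hs).const_mul k).frameVec ((hasDerivAt_sin s).const_mul r)
    (hasDerivAt_const s 0) ((hasDerivAt_cos s).const_mul r).neg
  refine h.congr_deriv ?_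
  congr 1 <;> field_simp <;> ring

lemma hasDerivAt_loxodrome_velocity (hs : sin s ≠ 0) :
    HasDerivAt (fun t => frameVec (k * log (tan (t / 2))) (r * cos t) (r * k) (r * sin t))
      (frameVec (k * log (tan (s / 2))) (-(r * sin s) - r * k ^ 2 / sin s)
        (r * k * (cos s / sin s)) (r * cos s)) s := by
  have h := ((hasDerivAt_log_tan_half hs).const_mul k).frameVec ((hasDerivAt_cos s).const_mul r)
    (hasDerivAt_const s (r * k)) ((hasDerivAt_sin s).const_mul r)
  refine h.congr_deriv ?_
  congr 1 <;> ring

lemma hasDerivAt_loxodrome_acceleration (hs : sin s ≠ 0) :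
    HasDerivAt (fun t => frameVec (k * log (tan (t / 2))) (-(r * sin t) - r * k ^ 2 / sin t)
        (r * k * (cos t / sin t)) (r * cos t))
      (frameVec (k * log (tan (s / 2))) (-(r * cos s))
        (-(r * k * (1 + sin s ^ 2 + k ^ 2) / sin s ^ 2)) (-(r * sin s))) s := by
  have h := ((hasDerivAt_log_tan_half hs).const_mul k).frameVec
    (((hasDerivAt_sin s).const_mul r).neg.sub ((hasDerivAt_const s (r * k ^ 2)).div
      (hasDerivAt_sin s) hs))
    (((hasDerivAt_cos s).div (hasDerivAt_sin s) hs).const_mul (r * k))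
    ((hasDerivAt_cos s).const_mul r)
  refine h.congr_deriv ?_
  congr 1
  · simp only [Pi.div_apply]
    field_simp
    ring
  · simp only [Pi.div_apply, Pi.sub_apply, Pi.neg_apply]
    field_simp
    linear_combination (-(r * k)) * sin_sq_add_cos_sq s
  · ring

lemma isOpen_setOf_sin_ne_zero : IsOpen {t : ℝ | sin t ≠ 0} :=
  isOpen_ne_fun continuous_sin continuous_const

lemma deriv_loxodrome_eqOn :
    EqOn (deriv (loxodrome r k))
      (fun t => frameVec (k * log (tan (t / 2))) (r * cos t) (r * k) (r * sin t))
      {t | sin t ≠ 0} :=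
  fun _ ht => (hasDerivAt_loxodrome r k ht).deriv

lemma deriv_deriv_loxodrome_eqOn :
    EqOn (deriv (deriv (loxodrome r k)))
      (fun t => frameVec (k * log (tan (t / 2))) (-(r * sin t) - r * k ^ 2 / sin t)
        (r * k * (cos t / sin t)) (r * cos t))
      {t | sin t ≠ 0} := fun _ ht =>
  ((deriv_loxodrome_eqOn r k).deriv isOpen_setOf_sin_ne_zero ht).trans
    (hasDerivAt_loxodrome_velocity r k ht).deriv

lemma deriv_deriv_deriv_loxodrome_eqOn :
    EqOn (deriv (deriv (deriv (loxodrome r k))))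
      (fun t => frameVec (k * log (tan (t / 2))) (-(r * cos t))
        (-(r * k * (1 + sin t ^ 2 + k ^ 2) / sin t ^ 2)) (-(r * sin t)))
      {t | sin t ≠ 0} := fun _ ht =>
  ((deriv_deriv_loxodrome_eqOn r k).deriv isOpen_setOf_sin_ne_zero ht).trans
    (hasDerivAt_loxodrome_acceleration r k ht).deriv

lemma norm_deriv_deriv_loxodrome (hs : sin s ≠ 0) :
    ‖deriv (deriv (loxodrome r k)) s‖ =
      √(r ^ 2 * (1 + k ^ 2) * (sin s ^ 2 + k ^ 2) / sin s ^ 2) := by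
  rw [deriv_deriv_loxodrome_eqOn r k hs, norm_frameVec]
  congr 1
  field_simp
  linear_combination r ^ 2 * (sin s ^ 2 + k ^ 2) * sin_sq_add_cos_sq s

lemma det3_derivs_loxodrome (hs : sin s ≠ 0) :
    det3 (deriv (loxodrome r k) s) (deriv (deriv (loxodrome r k)) s)
      (deriv (deriv (deriv (loxodrome r k))) s) = r ^ 3 * k * (1 + k ^ 2) ^ 2 / sin s ^ 2 := by
  rw [deriv_loxodrome_eqOn r k hs, deriv_deriv_loxodrome_eqOn r k hs,
    deriv_deriv_deriv_loxodrome_eqOn r k hs, det3_frameVec, det3_v3]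
  field_simp
  linear_combination r ^ 3 * k * (1 + k ^ 2) * sin_sq_add_cos_sq s

end Loxodrome

section SphericalLoxodrome

variable {θ s : ℝ}

lemma sin_sq_mul_one_add_cot_sq (hθ : sin θ ≠ 0) : sin θ ^ 2 * (1 + cot θ ^ 2) = 1 := by
  rw [cot_eq_cos_div_sin]
  field_simp
  linear_combination sin_sq_add_cos_sq θ

lemma one_sub_sin_sq_mul_cos_sq (hθ : sin θ ≠ 0) (s : ℝ) :
    1 - sin θ ^ 2 * cos s ^ 2 = sin θ ^ 2 * (sin s ^ 2 + cot θ ^ 2) := by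
  rw [cot_eq_cos_div_sin]
  field_simp
  linear_combination -sin θ ^ 2 * sin_sq_add_cos_sq s - sin_sq_add_cos_sq θ

lemma norm_deriv_deriv_loxodrome_sin_cot (hθ : 0 < sin θ) (hs : 0 < sin s) :
    ‖deriv (deriv (loxodrome (sin θ) (cot θ))) s‖ =
      √(1 - sin θ ^ 2 * cos s ^ 2) / (sin θ * sin s) := by
  rw [norm_deriv_deriv_loxodrome _ _ hs.ne', sin_sq_mul_one_add_cot_sq hθ.ne',
    one_sub_sin_sq_mul_cos_sq hθ.ne', one_mul, sqrt_mul (sq_nonneg _), sqrt_sq hθ.le,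
    sqrt_div' _ (sq_nonneg _), sqrt_sq hs.le]
  field_simp

lemma torsion_loxodrome_sin_cot (hθ : sin θ ≠ 0) (hs : sin s ≠ 0) :
    det3 (deriv (loxodrome (sin θ) (cot θ)) s) (deriv (deriv (loxodrome (sin θ) (cot θ))) s)
        (deriv (deriv (deriv (loxodrome (sin θ) (cot θ)))) s) /
      ‖deriv (deriv (loxodrome (sin θ) (cot θ))) s‖ ^ 2 =
      cos θ / (1 - sin θ ^ 2 * cos s ^ 2) := by
  rw [det3_derivs_loxodrome _ _ hs, norm_deriv_deriv_loxodrome _ _ hs, sq_sqrt (by positivity),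
    one_sub_sin_sq_mul_cos_sq hθ]
  rw [cot_eq_cos_div_sin]
  field_simp
  linear_combination cos θ * sin_sq_add_cos_sq θ

end SphericalLoxodrome

lemma not_exists_torsion_eq_const_mul_curvature {θ : ℝ} (hθ : θ ∈ Ioo 0 (π / 2)) :
    ¬ ∃ a : ℝ, ∀ s ∈ Ioo 0 π, cos θ / (1 - sin θ ^ 2 * cos s ^ 2) =
      a * (√(1 - sin θ ^ 2 * cos s ^ 2) / (sin θ * sin s)) := by
  rintro ⟨a, ha⟩
  have hsinθ : 0 < sin θ := sin_pos_of_pos_of_lt_pi hθ.1 (by linarith [hθ.2, pi_pos])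
  have hcosθ : 0 < cos θ := cos_pos_of_mem_Ioo ⟨by linarith [hθ.1, pi_pos], hθ.2⟩
  have ha_eq : a = sin θ * cos θ := by
    have h := ha (π / 2) ⟨by linarith [pi_pos], by linarith [pi_pos]⟩
    rw [cos_pi_div_two, sin_pi_div_two] at h
    norm_num at h
    field_simp at h
    linarith
  -- `τ / κ` tends to `0` as `s → 0`, and `sin s₀` is already small enough to see it.
  set s₀ := arcsin (cos θ ^ 3 / 2)
  have hcos_cube : cos θ ^ 3 ≤ 1 := pow_le_one₀ hcosθ.le (cos_le_one θ)
  have hsin₀ : sin s₀ = cos θ ^ 3 / 2 := sin_arcsin (by linarith [pow_pos hcosθ 3]) (by linarith)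
  have hs₀ : s₀ ∈ Ioo 0 π :=
    ⟨arcsin_pos.2 (by positivity), (arcsin_le_pi_div_two _).trans_lt (by linarith [pi_pos])⟩
  have h := ha s₀ hs₀
  rw [ha_eq, hsin₀] at h
  field_simp at h
  set u := 1 - sin θ ^ 2 * cos s₀ ^ 2
  have hu : cos θ ^ 2 ≤ u := by nlinarith [cos_sq_le_one s₀, sin_sq_add_cos_sq θ]
  have hu_pos : 0 < u := lt_of_lt_of_le (by positivity) hu
  rw [div_eq_iff hu_pos.ne'] at h
  have hcube : cos θ ^ 6 = 4 * u ^ 3 := by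
    calc cos θ ^ 6 = (cos θ ^ 3) ^ 2 := by ring
      _ = 4 * u ^ 2 * √u ^ 2 := by rw [h]; ring
      _ = 4 * u ^ 3 := by rw [sq_sqrt hu_pos.le]; ring
  nlinarith [pow_le_pow_left₀ (sq_nonneg _) hu 3, pow_pos hcosθ 6]

/-- The spherical curve (ω(s) = s) has curvature
√(1 − sin²θ cos²s)/(sin θ sin s) and torsion cos θ/(1 − sin²θ cos²s) on (0, π);
in particular the ratio τ/κ is not constant, so the Lancret relation fails. -/
theorem stmt_7 (θ : ℝ) (hθ : θ ∈ Set.Ioo 0 (Real.pi / 2))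
    (γ : ℝ → EuclideanSpace ℝ (Fin 3))
    (hγ : γ = fun s => v3
      (Real.sin θ * Real.sin s * Real.cos (Real.cot θ * Real.log (Real.tan (s / 2))))
      (Real.sin θ * Real.sin s * Real.sin (Real.cot θ * Real.log (Real.tan (s / 2))))
      (-(Real.sin θ * Real.cos s)))
    (κ τ : ℝ → ℝ)
    (hκ : ∀ s, κ s = ‖deriv (deriv γ) s‖)
    (hτ : ∀ s, τ s = det3 (deriv γ s) (deriv (deriv γ) s) (deriv (deriv (deriv γ)) s)
        / ‖deriv (deriv γ) s‖ ^ 2) :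
    (∀ s ∈ Set.Ioo (0 : ℝ) Real.pi,
      κ s = Real.sqrt (1 - Real.sin θ ^ 2 * Real.cos s ^ 2) / (Real.sin θ * Real.sin s) ∧
      τ s = Real.cos θ / (1 - Real.sin θ ^ 2 * Real.cos s ^ 2)) ∧
    ¬ ∃ a : ℝ, ∀ s ∈ Set.Ioo (0 : ℝ) Real.pi, τ s = a * κ s := by
  have hsinθ : 0 < sin θ := sin_pos_of_pos_of_lt_pi hθ.1 (by linarith [hθ.2, pi_pos])
  have hγ_eq : γ = loxodrome (sin θ) (cot θ) := by
    rw [hγ]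
    ext s : 1
    simp [loxodrome, frameVec]
  have hκτ : ∀ s ∈ Ioo 0 π,
      κ s = √(1 - sin θ ^ 2 * cos s ^ 2) / (sin θ * sin s) ∧
      τ s = cos θ / (1 - sin θ ^ 2 * cos s ^ 2) := by
    intro s hs
    have hsin : 0 < sin s := sin_pos_of_pos_of_lt_pi hs.1 hs.2
    rw [hκ, hτ, hγ_eq]
    exact ⟨norm_deriv_deriv_loxodrome_sin_cot hsinθ hsin,
      torsion_loxodrome_sin_cot hsinθ.ne' hsin.ne'⟩
  refine ⟨hκτ, fun ⟨a, ha⟩ => not_exists_torsion_eq_const_mul_curvature hθ ⟨a, fun s hs => ?_⟩⟩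
  rw [← (hκτ s hs).1, ← (hκτ s hs).2]
  exact ha s hs
end

section
/- Let c > 0 and θ ∈ ℝ, and let γ : ℝ → ℝ³ be a curve with γ₃(s) > 0 for all s, with hyperbolic unit speed (‖γ'(s)‖ₑ = γ₃(s)), such that γ₁(s)² + γ₂(s)² + γ₃(s)² = (1 + c²)·γ₃(s)² for all s (the Killing field V(p) = p has constant hyperbolic length √(1+c²) along γ) and ⟨γ(s), γ'(s)⟩ₑ/(√(1+c²)·γ₃(s)²) = cos θ for all s (γ makes constant hyperbolic angle θ with V). Then there exist m > 0, φ₀ ∈ ℝ and ε ∈ {−1, 1} such that γ(s) = m·e^{(cos θ/√(1+c²))·s}·(c·cos(ε·(sin θ/c)·s + φ₀), c·sin(ε·(sin θ/c)·s + φ₀), 1) for all s. In particular γ lies on the cone x² + y² = c²·z². -/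
open Real
open scoped RealInnerProductSpace

/-- Hyperbolic (upper half-space) inner product of u and v at the point p. -/
noncomputable def hInner (p u v : EuclideanSpace ℝ (Fin 3)) : ℝ := ⟪u, v⟫ / (p 2) ^ 2

/-- Hyperbolic (upper half-space) norm of v at the point p. -/
noncomputable def hNorm (p v : EuclideanSpace ℝ (Fin 3)) : ℝ := ‖v‖ / p 2

/-- Covariant acceleration ∇_{γ'}γ' of a hyperbolic unit-speed curve in the
upper half-space model: A(s) = γ''(s) − (2γ₃'(s)/γ₃(s))·γ'(s) + (‖γ'(s)‖ₑ²/γ₃(s))·e₃. -/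
noncomputable def hAccel (γ : ℝ → EuclideanSpace ℝ (Fin 3)) (s : ℝ) :
    EuclideanSpace ℝ (Fin 3) :=
  deriv (deriv γ) s - (2 * deriv (fun t => γ t 2) s / γ s 2) • deriv γ s
    + (‖deriv γ s‖ ^ 2 / γ s 2) • v3 0 0 1


/-- A hyperbolic unit-speed curve along which V(p) = p has constant
hyperbolic length √(1+c²) and which makes constant hyperbolic angle θ with V is the
helix γ(s) = m·e^{(cos θ/√(1+c²))s}·(c cos(ε(sin θ/c)s + φ₀), c sin(ε(sin θ/c)s + φ₀), 1),
lying on the cone x² + y² = c²z². -/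
theorem stmt_9 (c θ : ℝ) (hc : 0 < c)
    (γ : ℝ → EuclideanSpace ℝ (Fin 3))
    (hsm : ContDiff ℝ (⊤ : ℕ∞) γ)
    (hpos : ∀ s, 0 < γ s 2)
    (hspeed : ∀ s, ‖deriv γ s‖ = γ s 2)
    (hV : ∀ s, (γ s 0) ^ 2 + (γ s 1) ^ 2 + (γ s 2) ^ 2 = (1 + c ^ 2) * (γ s 2) ^ 2)
    (hangle : ∀ s, ⟪γ s, deriv γ s⟫ / (Real.sqrt (1 + c ^ 2) * (γ s 2) ^ 2) = Real.cos θ) :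
    (∃ m : ℝ, 0 < m ∧ ∃ φ₀ ε : ℝ, (ε = -1 ∨ ε = 1) ∧ ∀ s,
      γ s = (m * Real.exp ((Real.cos θ / Real.sqrt (1 + c ^ 2)) * s)) •
        v3 (c * Real.cos (ε * (Real.sin θ / c) * s + φ₀))
           (c * Real.sin (ε * (Real.sin θ / c) * s + φ₀)) 1) ∧
    ∀ s, (γ s 0) ^ 2 + (γ s 1) ^ 2 = c ^ 2 * (γ s 2) ^ 2 := by
  have h1c : (0:ℝ) < 1 + c ^ 2 := by positivity
  have hsq : Real.sqrt (1 + c ^ 2) ^ 2 = 1 + c ^ 2 := Real.sq_sqrt h1c.le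
  have hsqpos : (0:ℝ) < Real.sqrt (1 + c ^ 2) := Real.sqrt_pos.2 h1c
  set a : ℝ := Real.cos θ / Real.sqrt (1 + c ^ 2) with hadef
  have hsm' : ContDiff ℝ (⊤:ℕ∞) γ := hsm.of_le (by simp)
  have hdγ : Differentiable ℝ γ := (contDiff_infty_iff_deriv.mp hsm').1
  have hdγ' : Continuous (deriv γ) := (contDiff_infty_iff_deriv.mp hsm').2.continuous
  -- coordinate derivatives
  have hco : ∀ (i : Fin 3) (s : ℝ), HasDerivAt (fun t => γ t i) (deriv γ s i) s := by
    intro i s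
    have h := (hdγ s).hasDerivAt
    have h2 := (EuclideanSpace.proj (𝕜 := ℝ) i).hasFDerivAt.comp_hasDerivAt s h
    exact h2
  have hcont' : ∀ i : Fin 3, Continuous (fun s => deriv γ s i) := by
    intro i
    have := (EuclideanSpace.proj (𝕜 := ℝ) i).continuous.comp hdγ'
    exact this
  have hcont : ∀ i : Fin 3, Continuous (fun s => γ s i) := by
    intro i
    have := (EuclideanSpace.proj (𝕜 := ℝ) i).continuous.comp hdγ.continuous
    exact this
  have hzne : ∀ s, γ s 2 ≠ 0 := fun s => (hpos s).ne'
  have hczne : ∀ s, c * γ s 2 ≠ 0 := fun s => (mul_pos hc (hpos s)).ne'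
  -- inner product expansion
  have hinner : ∀ u v : EuclideanSpace ℝ (Fin 3), ⟪u, v⟫ =
      u 0 * v 0 + u 1 * v 1 + u 2 * v 2 := by
    intro u v
    simp [PiLp.inner_apply, Fin.sum_univ_three, RCLike.inner_apply, mul_comm]
  -- speed squared
  have hsp : ∀ s, deriv γ s 0 ^ 2 + deriv γ s 1 ^ 2 + deriv γ s 2 ^ 2 = γ s 2 ^ 2 := by
    intro s
    have h2 : ⟪deriv γ s, deriv γ s⟫ = γ s 2 ^ 2 := by
      rw [real_inner_self_eq_norm_sq, hspeed s]
    rw [hinner] at h2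
    nlinarith [h2]
  -- derivative of the hV identity
  have hxyz : ∀ s, γ s 0 * deriv γ s 0 + γ s 1 * deriv γ s 1 + γ s 2 * deriv γ s 2
      = (1 + c ^ 2) * (γ s 2 * deriv γ s 2) := by
    intro s
    have hL : HasDerivAt (fun t => γ t 0 ^ 2 + γ t 1 ^ 2 + γ t 2 ^ 2)
        (2 * γ s 0 * deriv γ s 0 + 2 * γ s 1 * deriv γ s 1 + 2 * γ s 2 * deriv γ s 2) s := by
      have h := (((hco 0 s).pow 2).add ((hco 1 s).pow 2)).add ((hco 2 s).pow 2)
      refine h.congr_deriv ?_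
      push_cast
      ring
    have hR : HasDerivAt (fun t => (1 + c ^ 2) * γ t 2 ^ 2)
        ((1 + c ^ 2) * (2 * γ s 2 * deriv γ s 2)) s := by
      have h := ((hco 2 s).pow 2).const_mul (1 + c ^ 2)
      refine h.congr_deriv ?_
      push_cast
      ring
    have hfun : (fun t => γ t 0 ^ 2 + γ t 1 ^ 2 + γ t 2 ^ 2)
        = (fun t => (1 + c ^ 2) * γ t 2 ^ 2) := funext hV
    rw [hfun] at hL
    have := hL.unique hR
    linarith
  -- z' = a z
  have hz' : ∀ s, deriv γ s 2 = a * γ s 2 := by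
    intro s
    have hang := hangle s
    rw [div_eq_iff ((mul_pos hsqpos (pow_pos (hpos s) 2)).ne'), hinner] at hang
    have h1 := hxyz s
    -- (1+c²) z z' = cosθ √(1+c²) z²
    have h2 : (1 + c ^ 2) * (γ s 2 * deriv γ s 2)
        = Real.cos θ * (Real.sqrt (1 + c ^ 2) * γ s 2 ^ 2) := by linarith
    have h4 : (Real.sqrt (1 + c ^ 2) * γ s 2) * (Real.sqrt (1 + c ^ 2) * deriv γ s 2)
        = (Real.sqrt (1 + c ^ 2) * γ s 2) * (Real.cos θ * γ s 2) := by
      linear_combination h2 + (γ s 2 * deriv γ s 2) * hsq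
    have h3 := mul_left_cancel₀ ((mul_pos hsqpos (hpos s)).ne') h4
    rw [hadef]
    field_simp [hc.ne', hzne s, hsqpos.ne']
    linear_combination h3
  -- z is an exponential
  have hz : ∀ s, γ s 2 = γ 0 2 * Real.exp (a * s) := by
    have hg : ∀ s, HasDerivAt (fun t => γ t 2 * Real.exp (-a * t)) 0 s := by
      intro s
      have he : HasDerivAt (fun t : ℝ => Real.exp (-a * t)) (Real.exp (-a * s) * (-a)) s := by
        have hlin : HasDerivAt (fun t : ℝ => -a * t) (-a) s := by
          simpa using (hasDerivAt_id s).const_mul (-a)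
        exact hlin.exp
      have h := (hco 2 s).mul he
      refine h.congr_deriv ?_
      rw [hz' s]
      ring
    have hgc : ∀ s, γ s 2 * Real.exp (-a * s) = γ 0 2 * Real.exp (-a * 0) := fun s =>
      is_const_of_deriv_eq_zero (fun t => (hg t).differentiableAt)
        (fun t => (hg t).deriv) s 0
    intro s
    have h := hgc s
    simp only [mul_zero, Real.exp_zero, mul_one, show ∀ t:ℝ, -a * t = -(a*t) from fun t => by ring,
      Real.exp_neg] at h
    field_simp at h
    linarith [h]
  -- the circle functions
  set ω : ℝ := Real.sin θ / c with hωdef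
  set u : ℝ → ℝ := fun s => γ s 0 / (c * γ s 2) with hudef
  set w : ℝ → ℝ := fun s => γ s 1 / (c * γ s 2) with hwdef
  set U : ℝ → ℝ := fun s => (deriv γ s 0 - a * γ s 0) / (c * γ s 2) with hUdef
  set W : ℝ → ℝ := fun s => (deriv γ s 1 - a * γ s 1) / (c * γ s 2) with hWdef
  have ha2 : a ^ 2 * (1 + c ^ 2) = Real.cos θ ^ 2 := by
    rw [hadef, div_pow, hsq, div_mul_cancel₀ _ h1c.ne']
  have hu' : ∀ s, HasDerivAt u (U s) s := by
    intro s
    have h := (hco 0 s).div ((hco 2 s).const_mul c) (hczne s)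
    refine h.congr_deriv ?_
    rw [hUdef]
    simp only
    rw [hz' s]
    field_simp [hc.ne', hzne s, hsqpos.ne']
  have hw' : ∀ s, HasDerivAt w (W s) s := by
    intro s
    have h := (hco 1 s).div ((hco 2 s).const_mul c) (hczne s)
    refine h.congr_deriv ?_
    rw [hWdef]
    simp only
    rw [hz' s]
    field_simp [hc.ne', hzne s, hsqpos.ne']
  have e1 : ∀ s, u s ^ 2 + w s ^ 2 = 1 := by
    intro s
    rw [hudef, hwdef]
    simp only
    field_simp [hc.ne', hzne s, hsqpos.ne']
    linear_combination hV s
  have e2 : ∀ s, u s * U s + w s * W s = 0 := by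
    intro s
    have hN : γ s 0 * (deriv γ s 0 - a * γ s 0) + γ s 1 * (deriv γ s 1 - a * γ s 1) = 0 := by
      linear_combination hxyz s - a * hV s + (c ^ 2 * γ s 2) * hz' s
    rw [hudef, hwdef, hUdef, hWdef]
    simp only
    rw [div_mul_div_comm, div_mul_div_comm, ← add_div,
      show γ s 0 * (deriv γ s 0 - a * γ s 0) + γ s 1 * (deriv γ s 1 - a * γ s 1) = 0 from hN,
      zero_div]
  have e3 : ∀ s, U s ^ 2 + W s ^ 2 = ω ^ 2 := by
    intro s
    have hN2 : (deriv γ s 0 - a * γ s 0) ^ 2 + (deriv γ s 1 - a * γ s 1) ^ 2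
        = Real.sin θ ^ 2 * γ s 2 ^ 2 := by
      linear_combination hsp s - 2 * a * hxyz s + a ^ 2 * hV s
        + (-(deriv γ s 2) - a * γ s 2 - 2 * a * c ^ 2 * γ s 2) * hz' s
        - γ s 2 ^ 2 * ha2 - γ s 2 ^ 2 * Real.sin_sq_add_cos_sq θ
    rw [hUdef, hWdef, hωdef]
    simp only
    rw [div_pow, div_pow, ← add_div, hN2, mul_pow, div_pow,
      mul_div_mul_right _ _ (pow_ne_zero 2 (hzne s))]
  -- the angular velocity
  set l : ℝ → ℝ := fun s => u s * W s - w s * U s with hldef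
  have hl2 : ∀ s, l s ^ 2 = ω ^ 2 := by
    intro s
    rw [hldef]
    simp only
    linear_combination (U s ^ 2 + W s ^ 2) * e1 s + e3 s - (u s * U s + w s * W s) * e2 s
  have hlc : Continuous l := by
    have hcu : Continuous u := by
      rw [hudef]; exact (hcont 0).div (continuous_const.mul (hcont 2)) hczne
    have hcw : Continuous w := by
      rw [hwdef]; exact (hcont 1).div (continuous_const.mul (hcont 2)) hczne
    have hcU : Continuous U := by
      rw [hUdef]
      exact ((hcont' 0).sub (continuous_const.mul (hcont 0))).div
        (continuous_const.mul (hcont 2)) hczne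
    have hcW : Continuous W := by
      rw [hWdef]
      exact ((hcont' 1).sub (continuous_const.mul (hcont 1))).div
        (continuous_const.mul (hcont 2)) hczne
    rw [hldef]
    exact (hcu.mul hcW).sub (hcw.mul hcU)
  have hlconst : ∀ s, l s = l 0 := by
    intro s
    rcases eq_or_ne (l s) (l 0) with h | hne
    · exact h
    exfalso
    by_cases hω0 : ω = 0
    · apply hne
      have h1 : l s = 0 := (pow_eq_zero_iff two_ne_zero).mp (by rw [hl2 s, hω0]; norm_num)
      have h2 : l 0 = 0 := (pow_eq_zero_iff two_ne_zero).mp (by rw [hl2 0, hω0]; norm_num)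
      rw [h1, h2]
    · have hlne : ∀ t, l t ≠ 0 := by
        intro t h0
        apply hω0
        have h := hl2 t
        rw [h0] at h
        have : ω ^ 2 = 0 := by linarith [h]
        exact (pow_eq_zero_iff two_ne_zero).mp this
      have hfac : (l s - l 0) * (l s + l 0) = 0 := by
        linear_combination hl2 s - hl2 0
      have hopp : l s = - l 0 := by
        rcases mul_eq_zero.mp hfac with h | h
        · exact absurd (by linarith : l s = l 0) hne
        · linarith
      have hmem : (0:ℝ) ∈ Set.uIcc (l 0) (l s) := by
        rcases lt_or_gt_of_ne (hlne 0) with h | h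
        · rw [Set.mem_uIcc]; left; constructor <;> linarith
        · rw [Set.mem_uIcc]; right; constructor <;> linarith
      obtain ⟨t, -, ht⟩ := intermediate_value_uIcc (hlc.continuousOn) hmem
      exact hlne t ht
  set Λ : ℝ := l 0 with hΛdef
  have hΛ2 : Λ ^ 2 = ω ^ 2 := hl2 0
  have h3 : ∀ s, u s * W s - w s * U s = Λ := by
    intro s
    have h := hlconst s
    simp only [hldef] at h
    exact h
  have hU : ∀ s, U s = -Λ * w s := by
    intro s
    linear_combination (-(U s)) * e1 s + u s * e2 s - w s * h3 s
  have hW : ∀ s, W s = Λ * u s := by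
    intro s
    linear_combination (-(W s)) * e1 s + w s * e2 s + u s * h3 s
  -- rotating frame
  set p : ℝ → ℝ := fun s => u s * Real.cos (Λ * s) + w s * Real.sin (Λ * s) with hpdef
  set q : ℝ → ℝ := fun s => - u s * Real.sin (Λ * s) + w s * Real.cos (Λ * s) with hqdef
  have hlin : ∀ s : ℝ, HasDerivAt (fun t : ℝ => Λ * t) Λ s := fun s => by
    simpa using (hasDerivAt_id s).const_mul Λ
  have hp' : ∀ s, HasDerivAt p 0 s := by
    intro s
    have h := ((hu' s).mul (hlin s).cos).add ((hw' s).mul (hlin s).sin)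
    rw [hpdef]
    refine h.congr_deriv ?_
    rw [hU s, hW s]
    ring
  have hq' : ∀ s, HasDerivAt q 0 s := by
    intro s
    have h := (((hu' s).neg).mul (hlin s).sin).add ((hw' s).mul (hlin s).cos)
    rw [hqdef]
    refine h.congr_deriv ?_
    rw [hU s, hW s, Pi.neg_apply]
    ring
  have hpc : ∀ s, p s = p 0 := fun s =>
    is_const_of_deriv_eq_zero (fun t => (hp' t).differentiableAt) (fun t => (hp' t).deriv) s 0
  have hqc : ∀ s, q s = q 0 := fun s =>
    is_const_of_deriv_eq_zero (fun t => (hq' t).differentiableAt) (fun t => (hq' t).deriv) s 0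
  have hp0 : p 0 = u 0 := by rw [hpdef]; simp
  have hq0 : q 0 = w 0 := by rw [hqdef]; simp
  -- the phase
  have huw0 : u 0 ^ 2 + w 0 ^ 2 = 1 := e1 0
  set φ₀ : ℝ := Complex.arg (u 0 + w 0 * Complex.I) with hφdef
  have habs : ‖u 0 + w 0 * Complex.I‖ = 1 := by
    rw [Complex.norm_def, Complex.normSq_add_mul_I, huw0]
    exact Real.sqrt_one
  have hzne0 : (u 0 + w 0 * Complex.I) ≠ 0 := by
    intro h0
    rw [h0] at habs
    simp at habs
  have hcosφ : Real.cos φ₀ = u 0 := by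
    rw [hφdef, Complex.cos_arg hzne0, habs]
    simp
  have hsinφ : Real.sin φ₀ = w 0 := by
    rw [hφdef, Complex.sin_arg, habs]
    simp
  have hueq : ∀ s, u s = Real.cos (Λ * s + φ₀) := by
    intro s
    have hps := hpc s
    have hqs := hqc s
    rw [hp0] at hps
    rw [hq0] at hqs
    simp only [hpdef, hqdef] at hps hqs
    rw [Real.cos_add, ← hcosφ, ← hsinφ] at *
    linear_combination Real.cos (Λ*s) * hps - Real.sin (Λ*s) * hqs
      - u s * Real.sin_sq_add_cos_sq (Λ*s)
  have hweq : ∀ s, w s = Real.sin (Λ * s + φ₀) := by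
    intro s
    have hps := hpc s
    have hqs := hqc s
    rw [hp0] at hps
    rw [hq0] at hqs
    simp only [hpdef, hqdef] at hps hqs
    rw [Real.sin_add, ← hcosφ, ← hsinφ] at *
    linear_combination Real.sin (Λ*s) * hps + Real.cos (Λ*s) * hqs
      - w s * Real.sin_sq_add_cos_sq (Λ*s)
  -- the sign
  obtain ⟨ε, hεpm, hεΛ⟩ : ∃ ε : ℝ, (ε = -1 ∨ ε = 1) ∧ Λ = ε * ω := by
    by_cases hsθ : Real.sin θ = 0
    · refine ⟨1, Or.inr rfl, ?_⟩
      have hω0 : ω = 0 := by rw [hωdef, hsθ, zero_div]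
      have h0 : Λ ^ 2 = 0 := by rw [hΛ2, hω0]; norm_num
      rw [pow_eq_zero_iff two_ne_zero] at h0
      rw [h0, hω0, mul_zero]
    · have hωne : ω ≠ 0 := by rw [hωdef]; exact div_ne_zero hsθ hc.ne'
      have hfac : (Λ - ω) * (Λ + ω) = 0 := by linear_combination hΛ2
      rcases mul_eq_zero.mp hfac with h | h
      · exact ⟨1, Or.inr rfl, by linarith⟩
      · exact ⟨-1, Or.inl rfl, by linarith⟩
  -- assemble
  refine ⟨⟨γ 0 2, hpos 0, φ₀, ε, hεpm, ?_⟩, fun s => by linear_combination hV s⟩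
  intro s
  have hx : γ s 0 = c * γ s 2 * u s := by
    rw [hudef]
    simp only
    rw [mul_comm (c * γ s 2) (γ s 0 / (c * γ s 2)), div_mul_cancel₀ _ (hczne s)]
  have hy : γ s 1 = c * γ s 2 * w s := by
    rw [hwdef]
    simp only
    rw [mul_comm (c * γ s 2) (γ s 1 / (c * γ s 2)), div_mul_cancel₀ _ (hczne s)]
  ext i
  fin_cases i
  · show γ s 0 = _
    rw [hx, hueq s, hz s, hεΛ]
    simp [v3, PiLp.smul_apply, smul_eq_mul]
    ring
  · show γ s 1 = _
    rw [hy, hweq s, hz s, hεΛ]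
    simp [v3, PiLp.smul_apply, smul_eq_mul]
    ring
  · show γ s 2 = _
    rw [hz s]
    simp [v3, PiLp.smul_apply, smul_eq_mul]
end

section
/- Let c > 0 and θ ∈ ℝ, and let γ : ℝ → ℝ³ be a curve with γ₃(s) > 0 for all s, with hyperbolic unit speed (‖γ'(s)‖ₑ = γ₃(s)), such that γ₁(s)² + γ₂(s)² = c²·γ₃(s)² for all s (the Killing field W(p) = (−p₂, p₁, 0) has constant hyperbolic length c along γ) and (−γ₂(s)·γ₁'(s) + γ₁(s)·γ₂'(s))/(c·γ₃(s)²) = cos θ for all s (γ makes constant hyperbolic angle θ with W). Then there exist m > 0, φ₀ ∈ ℝ and ε ∈ {−1, 1} such that γ(s) = m·e^{ε·(sin θ/√(1+c²))·s}·(c·cos((cos θ/c)·s + φ₀), c·sin((cos θ/c)·s + φ₀), 1) for all s. In particular γ lies on the Killing cylinder x² + y² = c²z². -/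
open Real
open scoped RealInnerProductSpace

/-- The rotational Killing vector field W(p) = (−p₂, p₁, 0). -/
noncomputable def W (p : EuclideanSpace ℝ (Fin 3)) : EuclideanSpace ℝ (Fin 3) :=
  v3 (-(p 1)) (p 0) 0

lemma pair_ode (ω c φ₀ : ℝ) (u v : ℝ → ℝ)
    (hu : ∀ s, HasDerivAt u (-ω * v s) s)
    (hv : ∀ s, HasDerivAt v (ω * u s) s)
    (hu0 : u 0 = c * Real.cos φ₀) (hv0 : v 0 = c * Real.sin φ₀) :
    ∀ s, u s = c * Real.cos (ω * s + φ₀) ∧ v s = c * Real.sin (ω * s + φ₀) := by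
  intro s
  set U : ℝ → ℝ := fun t => c * Real.cos (ω * t + φ₀) with hUdef
  set V : ℝ → ℝ := fun t => c * Real.sin (ω * t + φ₀) with hVdef
  have hlin : ∀ t : ℝ, HasDerivAt (fun r : ℝ => ω * r + φ₀) ω t := by
    intro t
    simpa using ((hasDerivAt_id t).const_mul ω).add_const φ₀
  have hU : ∀ t, HasDerivAt U (-ω * V t) t := by
    intro t
    have := ((hlin t).cos).const_mul c
    exact this.congr_deriv (by simp only [hVdef]; ring)
  have hV : ∀ t, HasDerivAt V (ω * U t) t := by
    intro t
    have := ((hlin t).sin).const_mul c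
    exact this.congr_deriv (by simp only [hUdef]; ring)
  set f : ℝ → ℝ := fun t => (u t - U t) ^ 2 + (v t - V t) ^ 2 with hfdef
  have hf : ∀ t, HasDerivAt f 0 t := by
    intro t
    have h1 := (hu t).sub (hU t)
    have h2 := (hv t).sub (hV t)
    have := ((h1.mul h1).add (h2.mul h2))
    have h3 : HasDerivAt f ((-ω * v t - -ω * V t) * (u t - U t) + (u t - U t) * (-ω * v t - -ω * V t)
        + ((ω * u t - ω * U t) * (v t - V t) + (v t - V t) * (ω * u t - ω * U t))) t := by
      rw [hfdef]; simp only [sq]; exact this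
    convert h3 using 1
    ring
  have hfc : f s = f 0 :=
    is_const_of_deriv_eq_zero (fun t => (hf t).differentiableAt) (fun t => (hf t).deriv) s 0
  have hf0 : f 0 = 0 := by simp [hfdef, hUdef, hVdef, hu0, hv0]
  have key : (u s - U s) ^ 2 + (v s - V s) ^ 2 = 0 := by
    have := hfc; rw [hf0] at this; exact this
  constructor
  · have : u s - U s = 0 := by nlinarith [sq_nonneg (u s - U s), sq_nonneg (v s - V s)]
    simpa [hUdef, sub_eq_zero] using this
  · have : v s - V s = 0 := by nlinarith [sq_nonneg (u s - U s), sq_nonneg (v s - V s)]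
    simpa [hVdef, sub_eq_zero] using this

lemma exp_ode (k : ℝ) (z : ℝ → ℝ) (hz : ∀ s, HasDerivAt z (k * z s) s) :
    ∀ s, z s = z 0 * Real.exp (k * s) := by
  intro s
  set g : ℝ → ℝ := fun t => z t * Real.exp (-(k * t)) with hgdef
  have hg : ∀ t, HasDerivAt g 0 t := by
    intro t
    have he : HasDerivAt (fun r : ℝ => Real.exp (-(k * r))) (-k * Real.exp (-(k * t))) t := by
      have h1 : HasDerivAt (fun r : ℝ => -(k * r)) (-k) t := by
        exact ((hasDerivAt_id t).const_mul k).neg.congr_deriv (by ring)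
      simpa [mul_comm] using h1.exp
    have := (hz t).mul he
    exact this.congr_deriv (by ring)
  have hgc : g s = g 0 :=
    is_const_of_deriv_eq_zero (fun t => (hg t).differentiableAt) (fun t => (hg t).deriv) s 0
  have h0 : z s * Real.exp (-(k * s)) = z 0 := by simpa [hgdef] using hgc
  have := congrArg (fun r => r * Real.exp (k * s)) h0
  simpa [mul_assoc, ← Real.exp_add] using this

lemma sign_const (a : ℝ) (ha : a ≠ 0) (q : ℝ → ℝ) (hq : Continuous q)
    (hsq : ∀ s, q s ^ 2 = a ^ 2) : ∀ s, q s = q 0 := by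
  have hpm : ∀ s, q s = a ∨ q s = -a := by
    intro s
    have h0 : (q s - a) * (q s + a) = 0 := by nlinarith [hsq s]
    rcases mul_eq_zero.mp h0 with h | h
    · left; linarith
    · right; linarith
  intro s
  by_contra h
  have huI : (0 : ℝ) ∈ Set.uIcc a (-a) := by
    rcases le_or_gt a 0 with h' | h'
    · exact Set.mem_uIcc.mpr (Or.inl ⟨h', by linarith⟩)
    · exact Set.mem_uIcc.mpr (Or.inr ⟨by linarith, by linarith⟩)
  have hmem : (0 : ℝ) ∈ Set.uIcc (q 0) (q s) := by
    rcases hpm 0 with h0 | h0 <;> rcases hpm s with hs | hs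
    · exact absurd (hs.trans h0.symm) h
    · rw [h0, hs]; exact huI
    · rw [h0, hs, Set.uIcc_comm]; exact huI
    · exact absurd (hs.trans h0.symm) h
  obtain ⟨t, _, ht⟩ := intermediate_value_uIcc (hq.continuousOn) hmem
  have h2 := hsq t
  rw [ht] at h2
  exact ha (by nlinarith)

/-- A hyperbolic unit-speed curve along which W(p) = (−p₂, p₁, 0) has
constant hyperbolic length c > 0 and which makes constant hyperbolic angle θ with W is
the helix γ(s) = m·e^{ε(sin θ/√(1+c²))s}·(c cos((cos θ/c)s + φ₀), c sin((cos θ/c)s + φ₀), 1),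
lying on the Killing cylinder x² + y² = c²z². -/
theorem stmt_12 (c θ : ℝ) (hc : 0 < c)
    (γ : ℝ → EuclideanSpace ℝ (Fin 3))
    (hsm : ContDiff ℝ (⊤ : ℕ∞) γ)
    (hpos : ∀ s, 0 < γ s 2)
    (hspeed : ∀ s, ‖deriv γ s‖ = γ s 2)
    (hW : ∀ s, (γ s 0) ^ 2 + (γ s 1) ^ 2 = c ^ 2 * (γ s 2) ^ 2)
    (hangle : ∀ s, (-(γ s 1) * deriv (fun t => γ t 0) s + γ s 0 * deriv (fun t => γ t 1) s)
        / (c * (γ s 2) ^ 2) = Real.cos θ) :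
    (∃ m : ℝ, 0 < m ∧ ∃ φ₀ ε : ℝ, (ε = -1 ∨ ε = 1) ∧ ∀ s,
      γ s = (m * Real.exp (ε * (Real.sin θ / Real.sqrt (1 + c ^ 2)) * s)) •
        v3 (c * Real.cos ((Real.cos θ / c) * s + φ₀))
           (c * Real.sin ((Real.cos θ / c) * s + φ₀)) 1) ∧
    ∀ s, (γ s 0) ^ 2 + (γ s 1) ^ 2 = c ^ 2 * (γ s 2) ^ 2 := by
  refine ⟨?_, hW⟩
  have hdiff := hsm.differentiable (by simp)
  have hcd : ∀ (i : Fin 3) (s : ℝ), HasDerivAt (fun t => γ t i) (deriv γ s i) s := fun i s => by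
    exact (EuclideanSpace.proj i).hasFDerivAt.comp_hasDerivAt s ((hdiff s).hasDerivAt)
  set X : ℝ → ℝ := fun s => deriv γ s 0 with hXd
  set Y : ℝ → ℝ := fun s => deriv γ s 1 with hYd
  set Z : ℝ → ℝ := fun s => deriv γ s 2 with hZd
  have hx : ∀ s, HasDerivAt (fun t => γ t 0) (X s) s := hcd 0
  have hy : ∀ s, HasDerivAt (fun t => γ t 1) (Y s) s := hcd 1
  have hz : ∀ s, HasDerivAt (fun t => γ t 2) (Z s) s := hcd 2
  have hzne : ∀ s, γ s 2 ≠ 0 := fun s => (hpos s).ne'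
  -- squared speed
  have hsp2 : ∀ s, X s ^ 2 + Y s ^ 2 + Z s ^ 2 = γ s 2 ^ 2 := by
    intro s
    have h1 : ‖deriv γ s‖ ^ 2 = X s ^ 2 + Y s ^ 2 + Z s ^ 2 := by
      rw [EuclideanSpace.norm_eq, Real.sq_sqrt (by positivity)]
      simp [Fin.sum_univ_three, hXd, hYd, hZd]
    rw [← h1, hspeed s]
  -- derivative of the cylinder equation
  have hWd : ∀ s, γ s 0 * X s + γ s 1 * Y s = c ^ 2 * (γ s 2 * Z s) := by
    intro s
    have hF : ∀ t, HasDerivAt (fun t => (γ t 0) ^ 2 + (γ t 1) ^ 2 - c ^ 2 * (γ t 2) ^ 2)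
        ((2 : ℕ) * γ t 0 ^ 1 * X t + (2 : ℕ) * γ t 1 ^ 1 * Y t
          - c ^ 2 * ((2 : ℕ) * γ t 2 ^ 1 * Z t)) t := by
      intro t
      exact (((hx t).pow 2).add ((hy t).pow 2)).sub (((hz t).pow 2).const_mul (c ^ 2))
    have hF0 : (fun t => (γ t 0) ^ 2 + (γ t 1) ^ 2 - c ^ 2 * (γ t 2) ^ 2) = fun _ => (0 : ℝ) := by
      funext t
      have := hW t
      simp only []
      linarith
    have h2 := hF s
    rw [hF0] at h2
    have h3 := h2.unique (hasDerivAt_const s 0)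
    push_cast at h3
    nlinarith [h3]
  -- angle equation cleared of denominators
  have hA : ∀ s, -(γ s 1) * X s + γ s 0 * Y s = Real.cos θ * (c * γ s 2 ^ 2) := by
    intro s
    have h := hangle s
    rw [div_eq_iff (mul_ne_zero hc.ne' (pow_ne_zero 2 (hzne s)))] at h
    rw [(hx s).deriv, (hy s).deriv] at h
    exact h
  -- key component-derivative identities
  have key1 : ∀ s, c * (X s * γ s 2 - γ s 0 * Z s) = -(Real.cos θ) * γ s 1 * γ s 2 := by
    intro s
    have h0 : (c * γ s 2) * (c * (X s * γ s 2 - γ s 0 * Z s))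
        = (c * γ s 2) * (-(Real.cos θ) * γ s 1 * γ s 2) := by
      linear_combination (γ s 0) * hWd s - (γ s 1) * hA s - (X s) * hW s
    exact mul_left_cancel₀ (mul_ne_zero hc.ne' (hzne s)) h0
  have key2 : ∀ s, c * (Y s * γ s 2 - γ s 1 * Z s) = Real.cos θ * γ s 0 * γ s 2 := by
    intro s
    have h0 : (c * γ s 2) * (c * (Y s * γ s 2 - γ s 1 * Z s))
        = (c * γ s 2) * (Real.cos θ * γ s 0 * γ s 2) := by
      linear_combination (γ s 1) * hWd s + (γ s 0) * hA s - (Y s) * hW s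
    exact mul_left_cancel₀ (mul_ne_zero hc.ne' (hzne s)) h0
  -- the z-ODE squared
  have hZsq : ∀ s, (1 + c ^ 2) * Z s ^ 2 = Real.sin θ ^ 2 * γ s 2 ^ 2 := by
    intro s
    have hpy := Real.sin_sq_add_cos_sq θ
    have h0 : (c * γ s 2) ^ 2 * ((1 + c ^ 2) * Z s ^ 2)
        = (c * γ s 2) ^ 2 * (Real.sin θ ^ 2 * γ s 2 ^ 2) := by
      linear_combination (-(c * γ s 2 * X s + c * γ s 0 * Z s - Real.cos θ * γ s 1 * γ s 2)) * key1 s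
        + (-(c * γ s 2 * Y s + c * γ s 1 * Z s + Real.cos θ * γ s 0 * γ s 2)) * key2 s
        + (-(c ^ 2 * Z s ^ 2 + Real.cos θ ^ 2 * γ s 2 ^ 2)) * hW s
        + (c ^ 2 * γ s 2 ^ 2) * hsp2 s
        - (c ^ 2 * γ s 2 ^ 4) * hpy
    exact mul_left_cancel₀ (pow_ne_zero 2 (mul_ne_zero hc.ne' (hzne s))) h0
  -- u, v and their circular ODE
  set u : ℝ → ℝ := fun s => γ s 0 / γ s 2 with hud
  set v : ℝ → ℝ := fun s => γ s 1 / γ s 2 with hvd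
  have hu : ∀ s, HasDerivAt u (-(Real.cos θ / c) * v s) s := by
    intro s
    have h := (hx s).div (hz s) (hzne s)
    refine h.congr_deriv (Eq.symm ?_)
    rw [hvd]
    have hz2 := hzne s
    have hcne := hc.ne'
    field_simp
    linear_combination (-1) * key1 s
  have hv : ∀ s, HasDerivAt v ((Real.cos θ / c) * u s) s := by
    intro s
    have h := (hy s).div (hz s) (hzne s)
    refine h.congr_deriv (Eq.symm ?_)
    rw [hud]
    have hz2 := hzne s
    have hcne := hc.ne'
    field_simp
    linear_combination (-1) * key2 s
  have huv0 : u 0 ^ 2 + v 0 ^ 2 = c ^ 2 := by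
    have h := hW 0
    rw [hud, hvd]
    have hz2 := hzne 0
    field_simp
    linear_combination h
  set w : ℂ := ⟨u 0, v 0⟩ with hwd
  have habs : ‖w‖ = c := by
    have h1 : ‖w‖ ^ 2 = c ^ 2 := by
      rw [Complex.sq_norm]
      rw [hwd]
      simp [Complex.normSq_mk]
      linear_combination huv0
    calc ‖w‖ = Real.sqrt (‖w‖ ^ 2) := (Real.sqrt_sq (norm_nonneg _)).symm
    _ = Real.sqrt (c ^ 2) := by rw [h1]
    _ = c := Real.sqrt_sq hc.le
  have hw0 : w ≠ 0 := by
    intro h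
    rw [h] at habs
    simp at habs
    exact hc.ne' habs.symm
  set φ₀ := Complex.arg w with hphid
  have hu0 : u 0 = c * Real.cos φ₀ := by
    rw [hphid, Complex.cos_arg hw0, habs]
    rw [show w.re = u 0 from rfl]
    field_simp
  have hv0 : v 0 = c * Real.sin φ₀ := by
    rw [hphid, Complex.sin_arg, habs]
    rw [show w.im = v 0 from rfl]
    field_simp
  have huv := pair_ode (Real.cos θ / c) c φ₀ u v hu hv hu0 hv0
  -- the z part
  set a := Real.sin θ / Real.sqrt (1 + c ^ 2) with had
  have ha2 : a ^ 2 = Real.sin θ ^ 2 / (1 + c ^ 2) := by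
    rw [had, div_pow, Real.sq_sqrt (by positivity)]
  have hZsq' : ∀ s, Z s ^ 2 = a ^ 2 * γ s 2 ^ 2 := by
    intro s
    rw [ha2]
    have h := hZsq s
    have h2 : (0:ℝ) < 1 + c ^ 2 := by positivity
    field_simp
    linarith
  obtain ⟨ε, hεpm, hzode⟩ : ∃ ε : ℝ, (ε = -1 ∨ ε = 1) ∧
      ∀ s, HasDerivAt (fun t => γ t 2) (ε * a * γ s 2) s := by
    by_cases ha : a = 0
    · refine ⟨1, Or.inr rfl, fun s => ?_⟩
      have hZ0 : Z s = 0 := by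
        have h := hZsq' s
        rw [ha] at h
        simpa using h
      have h := hz s
      rw [hZ0] at h
      have : (1:ℝ) * a * γ s 2 = 0 := by rw [ha]; ring
      rw [this]
      exact h
    · set q : ℝ → ℝ := fun s => Z s / γ s 2 with hqd
      have hqc : Continuous q := by
        apply Continuous.div
        · exact (EuclideanSpace.proj (2 : Fin 3)).continuous.comp (hsm.continuous_deriv (by simp))
        · exact (EuclideanSpace.proj (2 : Fin 3)).continuous.comp hsm.continuous
        · exact fun s => hzne s
      have hqsq : ∀ s, q s ^ 2 = a ^ 2 := by
        intro s
        rw [hqd]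
        have hz2 := hzne s
        field_simp
        linear_combination hZsq' s
      have hqconst := sign_const a ha q hqc hqsq
      refine ⟨q 0 / a, ?_, ?_⟩
      · have h1 : (q 0 / a - 1) * (q 0 / a + 1) = 0 := by
          have h2 := hqsq 0
          field_simp
          linear_combination h2
        rcases mul_eq_zero.mp h1 with h | h
        · right; linarith
        · left; linarith
      · intro s
        have hZs : Z s = q 0 * γ s 2 := by
          have h : q s = q 0 := hqconst s
          have h2 : Z s = q s * γ s 2 := by
            show Z s = Z s / γ s 2 * γ s 2
            rw [div_mul_cancel₀ _ (hzne s)]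
          rw [h2, h]
        have h := hz s
        rw [hZs] at h
        have he : q 0 / a * a * γ s 2 = q 0 * γ s 2 := by
          field_simp
        rw [he]
        exact h
  have hzexp := exp_ode (ε * a) (fun t => γ t 2) hzode
  refine ⟨γ 0 2, hpos 0, φ₀, ε, hεpm, fun s => ?_⟩
  have hz2 : γ s 2 = γ 0 2 * Real.exp (ε * a * s) := hzexp s
  have hus : γ s 0 = γ s 2 * (c * Real.cos (Real.cos θ / c * s + φ₀)) := by
    have h := (huv s).1
    rw [← h]
    show γ s 0 = γ s 2 * (γ s 0 / γ s 2)
    rw [mul_comm, div_mul_cancel₀ _ (hzne s)]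
  have hvs : γ s 1 = γ s 2 * (c * Real.sin (Real.cos θ / c * s + φ₀)) := by
    have h := (huv s).2
    rw [← h]
    show γ s 1 = γ s 2 * (γ s 1 / γ s 2)
    rw [mul_comm, div_mul_cancel₀ _ (hzne s)]
  ext i
  fin_cases i
  · show γ s 0 = _
    rw [hus, hz2]
    simp [v3, PiLp.smul_apply]
  · show γ s 1 = _
    rw [hvs, hz2]
    simp [v3, PiLp.smul_apply]
  · show γ s 2 = _
    rw [hz2]
    simp [v3, PiLp.smul_apply]
end

section
/- Let c > 0 and θ ∈ ℝ, and let γ : ℝ → ℝ³ be a curve with hyperbolic unit speed such that γ₃(s) = c for all s (the Killing field P = e₁ = (1,0,0) has constant hyperbolic length 1/c along γ) and γ₁'(s)/c = cos θ for all s (γ makes constant hyperbolic angle θ with P). Then there exist x₀, y₀ ∈ ℝ and ε ∈ {−1, 1} such that γ(s) = (s·c·cos θ + x₀, ε·s·c·sin θ + y₀, c) for all s; that is, γ is a Euclidean straight line in the horosphere {z = c}. -/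
open Real
open scoped RealInnerProductSpace

/-- Integration of a constant derivative. -/
lemma lin_of_hasDerivAt (f : ℝ → ℝ) (k : ℝ) (hf : ∀ s, HasDerivAt f k s) (s : ℝ) :
    f s = s * k + f 0 := by
  have hg : ∀ x, HasDerivAt (fun t => f t - t * k) 0 x := by
    intro x
    have h := (hf x).sub ((hasDerivAt_id' x).mul_const k)
    rw [one_mul, sub_self] at h
    exact h
  have hconst := is_const_of_deriv_eq_zero (f := fun t => f t - t * k)
    (fun x => (hg x).differentiableAt) (fun x => (hg x).deriv) s 0
  linarith [hconst]

/-- A hyperbolic unit-speed curve lying in the horosphere {z = c} that makes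
constant hyperbolic angle θ with P = e₁ is a Euclidean straight line
γ(s) = (s·c·cos θ + x₀, ε·s·c·sin θ + y₀, c). -/
theorem stmt_15 (c θ : ℝ) (hc : 0 < c)
    (γ : ℝ → EuclideanSpace ℝ (Fin 3))
    (hsm : ContDiff ℝ (⊤ : ℕ∞) γ)
    (hspeed : ∀ s, ‖deriv γ s‖ = γ s 2)
    (hz : ∀ s, γ s 2 = c)
    (hangle : ∀ s, deriv (fun t => γ t 0) s / c = Real.cos θ) :
    ∃ x₀ y₀ ε : ℝ, (ε = -1 ∨ ε = 1) ∧ ∀ s,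
      γ s = v3 (s * c * Real.cos θ + x₀) (ε * s * c * Real.sin θ + y₀) c := by
  have hcne : c ≠ 0 := hc.ne'
  have hdiff : Differentiable ℝ γ := hsm.differentiable (by simp)
  have hderiv : ∀ i : Fin 3, ∀ s : ℝ, HasDerivAt (fun t => γ t i) (deriv γ s i) s := by
    intro i s
    have h1 := (hdiff s).hasDerivAt
    have h2 := ((EuclideanSpace.proj i : EuclideanSpace ℝ (Fin 3) →L[ℝ] ℝ)).hasFDerivAt.comp_hasDerivAt s h1
    exact h2
  -- z-component derivative is 0
  have hd2 : ∀ s, deriv γ s 2 = 0 := by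
    intro s
    have h1 : deriv (fun t => γ t 2) s = deriv γ s 2 := (hderiv 2 s).deriv
    have h2 : (fun t => γ t 2) = fun _ => c := funext hz
    rw [← h1, h2, deriv_const]
  have hd0 : ∀ s, deriv γ s 0 = c * Real.cos θ := by
    intro s
    have h := hangle s
    have h1 : deriv (fun t => γ t 0) s = deriv γ s 0 := (hderiv 0 s).deriv
    rw [h1, div_eq_iff hcne] at h
    linarith
  have hnorm2 : ∀ s, (deriv γ s 0) ^ 2 + (deriv γ s 1) ^ 2 + (deriv γ s 2) ^ 2 = c ^ 2 := by
    intro s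
    have h := hspeed s
    rw [hz s] at h
    have h2 : ‖deriv γ s‖ ^ 2 = c ^ 2 := by rw [h]
    rw [EuclideanSpace.norm_eq, Real.sq_sqrt (by positivity)] at h2
    simpa [Fin.sum_univ_three, sq_abs] using h2
  have hd1sq : ∀ s, (deriv γ s 1) ^ 2 = (c * Real.sin θ) ^ 2 := by
    intro s
    have h := hnorm2 s
    rw [hd0 s, hd2 s] at h
    nlinarith [Real.sin_sq_add_cos_sq θ]
  -- continuity of the y-derivative
  have hgcont : Continuous fun s => deriv γ s 1 := by
    have h1 : Continuous (deriv γ) := hsm.continuous_deriv (by simp)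
    exact (EuclideanSpace.proj (1 : Fin 3) : EuclideanSpace ℝ (Fin 3) →L[ℝ] ℝ).continuous.comp h1
  -- the y-derivative is constant
  have hconst1 : ∀ s, deriv γ s 1 = deriv γ 0 1 := by
    intro s
    by_contra hne
    have hopp : deriv γ s 1 = -(deriv γ 0 1) := by
      have h1 := hd1sq s
      have h2 := hd1sq 0
      have hfac : (deriv γ s 1 - deriv γ 0 1) * (deriv γ s 1 + deriv γ 0 1) = 0 := by nlinarith
      rcases mul_eq_zero.1 hfac with h | h
      · exact absurd (by linarith) hne
      · linarith
    have hne0 : deriv γ 0 1 ≠ 0 := by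
      intro h0
      apply hne
      rw [h0] at hopp ⊢
      simpa using hopp
    -- intermediate value: some t with deriv γ t 1 = 0
    have : (0 : ℝ) ∈ Set.range fun t => deriv γ t 1 := by
      rcases lt_or_gt_of_ne hne0 with hlt | hgt
      · have := intermediate_value_univ 0 s hgcont
        apply this
        constructor <;> simp only [hopp] <;> linarith
      · have := intermediate_value_univ s 0 hgcont
        apply this
        constructor <;> simp only [hopp] <;> linarith
    rcases this with ⟨t, ht⟩
    simp only at ht
    have h := hd1sq t
    rw [ht] at h
    have hs2 : (deriv γ 0 1) ^ 2 = (c * Real.sin θ) ^ 2 := hd1sq 0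
    have hg0 : deriv γ 0 1 ^ 2 = 0 := by nlinarith
    exact hne0 ((pow_eq_zero_iff (by norm_num)).1 hg0)
  -- define ε
  by_cases hsin : Real.sin θ = 0
  · -- y-derivative is 0
    have hd1 : ∀ s, deriv γ s 1 = 0 := by
      intro s
      have h := hd1sq s
      rw [hsin] at h
      nlinarith
    refine ⟨γ 0 0, γ 0 1, 1, Or.inr rfl, fun s => ?_⟩
    ext i
    fin_cases i
    · have := lin_of_hasDerivAt (fun t => γ t 0) (c * Real.cos θ)
        (fun x => by simpa [hd0 x] using hderiv 0 x) s
      simpa [v3, mul_assoc] using this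
    · have := lin_of_hasDerivAt (fun t => γ t 1) 0
        (fun x => by simpa [hd1 x] using hderiv 1 x) s
      simp [v3, hsin]
      simpa using this
    · simpa [v3] using hz s
  · -- y-derivative is ± c sin θ
    have hane : c * Real.sin θ ≠ 0 := mul_ne_zero hcne hsin
    set ε := deriv γ 0 1 / (c * Real.sin θ) with hε
    have hd1 : ∀ s, deriv γ s 1 = ε * (c * Real.sin θ) := by
      intro s
      rw [hconst1 s, hε]
      field_simp
    have hεpm : ε = -1 ∨ ε = 1 := by
      have h := hd1sq 0
      have : (deriv γ 0 1 - c * Real.sin θ) * (deriv γ 0 1 + c * Real.sin θ) = 0 := by nlinarith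
      rcases mul_eq_zero.1 this with h' | h'
      · right; rw [hε]; field_simp; linarith
      · left; rw [hε]; field_simp; linarith
    refine ⟨γ 0 0, γ 0 1, ε, hεpm, fun s => ?_⟩
    ext i
    fin_cases i
    · have := lin_of_hasDerivAt (fun t => γ t 0) (c * Real.cos θ)
        (fun x => by simpa [hd0 x] using hderiv 0 x) s
      simpa [v3, mul_assoc] using this
    · have := lin_of_hasDerivAt (fun t => γ t 1) (ε * (c * Real.sin θ))
        (fun x => by simpa [hd1 x] using hderiv 1 x) s
      simp only [v3]
      show γ s 1 = ε * s * c * Real.sin θ + γ 0 1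
      rw [this]; ring
    · simpa [v3] using hz s
end
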